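/- Without assuming the Codazzi condition, for all smooth one-forms α, β, γ on E and all x ∈ E: (a) ⟨γ(x), Δ(h)(α,β)(x)⟩ = (∇_{h_#β(x)} h)(α,γ)(x) − (∇_{h_#α(x)} h)(β,γ)(x); and (b) ⟨γ(x), h_#(x)((𝒟_αβ)(x))⟩ = ⟨γ(x), D[h_#β](x)(h_#α(x))⟩ + ⟨β(x), Δ(h)(α,γ)(x)⟩. (The unnumbered Proposition of Section 6, equations (eqdelta) and (eqnabla).) -/

import Mathlib

/-!
Statement 4: the two identities (eqdelta) and (eqnabla) of Section 6, valid
without assuming the Codazzi condition: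
(a) ⟨γ(x), Δ(h)(α,β)(x)⟩ = (∇_{h_#β(x)} h)(α,γ)(x) − (∇_{h_#α(x)} h)(β,γ)(x);
(b) ⟨γ(x), h_#(x)((𝒟_αβ)(x))⟩ = ⟨γ(x), D[h_#β](x)(h_#α(x))⟩ + ⟨β(x), Δ(h)(α,γ)(x)⟩.
-/

noncomputable section

variable {E : Type*} [NormedAddCommGroup E] [NormedSpace ℝ E]

/-- The scalar function `x ↦ h(x)(α(x), β(x))`. -/
def hfun (hs : E → (E →L[ℝ] ℝ) →L[ℝ] E) (α β : E → (E →L[ℝ] ℝ)) (x : E) : ℝ :=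
  (β x) (hs x (α x))

/-- The vector field `h_#α : x ↦ h_#(x)(α(x))`. -/
def hSharpV (hs : E → (E →L[ℝ] ℝ) →L[ℝ] E) (α : E → (E →L[ℝ] ℝ)) (x : E) : E :=
  hs x (α x)

/-- The covariant derivative `(∇_v h)(α,β)(x)` of `h` in the constant direction `v`. -/
def nablaH (hs : E → (E →L[ℝ] ℝ) →L[ℝ] E) (v : E) (α β : E → (E →L[ℝ] ℝ)) (x : E) : ℝ :=
  fderiv ℝ (hfun hs α β) x v
    - (β x) (hs x (fderiv ℝ α x v))
    - (fderiv ℝ β x v) (hs x (α x))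

/-- The product `𝒟` on one-forms:
`(𝒟_α β)(x)(v) = (∇_v h)(α,β)(x) + (Dβ(x)(h_#α(x)))(v)`. -/
def Dop (hs : E → (E →L[ℝ] ℝ) →L[ℝ] E) (α β : E → (E →L[ℝ] ℝ)) (x : E) :
    E →L[ℝ] ℝ :=
  fderiv ℝ (hfun hs α β) x
    - (β x).comp ((hs x).comp (fderiv ℝ α x))
    - (fderiv ℝ β x).flip (hs x (α x))
    + fderiv ℝ β x (hs x (α x))

/-- The bracket of one-forms `[α,β]_𝒟(x) = Dβ(x)(h_#α(x)) − Dα(x)(h_#β(x))`. -/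
def braD (hs : E → (E →L[ℝ] ℝ) →L[ℝ] E) (α β : E → (E →L[ℝ] ℝ)) (x : E) :
    E →L[ℝ] ℝ :=
  fderiv ℝ β x (hs x (α x)) - fderiv ℝ α x (hs x (β x))

/-- `Δ(h)(α,β) = h_#([α,β]_𝒟) − [h_#α, h_#β]`. -/
def DeltaH (hs : E → (E →L[ℝ] ℝ) →L[ℝ] E) (α β : E → (E →L[ℝ] ℝ)) (x : E) : E :=
  hs x (braD hs α β x)
    - (fderiv ℝ (hSharpV hs β) x (hSharpV hs α x)
        - fderiv ℝ (hSharpV hs α) x (hSharpV hs β x))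

section Aux

variable {E : Type*} [NormedAddCommGroup E] [NormedSpace ℝ E]

lemma diff_hSharpV {hs : E → (E →L[ℝ] ℝ) →L[ℝ] E} (hsd : Differentiable ℝ hs)
    {α : E → (E →L[ℝ] ℝ)} (hα : Differentiable ℝ α) :
    Differentiable ℝ (hSharpV hs α) :=
  hsd.clm_apply hα

lemma fderiv_hSharpV' {hs : E → (E →L[ℝ] ℝ) →L[ℝ] E} (hsd : Differentiable ℝ hs)
    {α : E → (E →L[ℝ] ℝ)} (hα : Differentiable ℝ α) (x v : E) :
    fderiv ℝ (hSharpV hs α) x v = (fderiv ℝ hs x v) (α x) + hs x (fderiv ℝ α x v) := by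
  have : hSharpV hs α = fun y => (hs y) (α y) := rfl
  rw [this, fderiv_clm_apply (hsd x) (hα x)]
  simp [add_comm]

lemma fderiv_hfun' {hs : E → (E →L[ℝ] ℝ) →L[ℝ] E} (hsd : Differentiable ℝ hs)
    {α β : E → (E →L[ℝ] ℝ)} (hα : Differentiable ℝ α) (hβ : Differentiable ℝ β) (x v : E) :
    fderiv ℝ (hfun hs α β) x v
      = (fderiv ℝ β x v) (hs x (α x)) + (β x) ((fderiv ℝ hs x v) (α x))
        + (β x) (hs x (fderiv ℝ α x v)) := by
  have : hfun hs α β = fun y => (β y) (hSharpV hs α y) := rfl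
  rw [this, fderiv_clm_apply (hβ x) (diff_hSharpV hsd hα x)]
  simp [fderiv_hSharpV' hsd hα x v, hSharpV]
  ring

lemma fderiv_hs_symm {hs : E → (E →L[ℝ] ℝ) →L[ℝ] E} (hsd : Differentiable ℝ hs)
    (hsym : ∀ (x : E) (a b : E →L[ℝ] ℝ), b (hs x a) = a (hs x b))
    (x v : E) (a b : E →L[ℝ] ℝ) :
    b ((fderiv ℝ hs x v) a) = a ((fderiv ℝ hs x v) b) := by
  have key : ∀ c d : E →L[ℝ] ℝ,
      fderiv ℝ (fun y => d (hs y c)) x v = d ((fderiv ℝ hs x v) c) := by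
    intro c d
    have h1 : (fun y => d (hs y c)) = fun y => ((fun _ : E => d) y) ((fun y => hs y c) y) := rfl
    have h2 : DifferentiableAt ℝ (fun y => hs y c) x :=
      (hsd x).clm_apply (differentiableAt_const c)
    rw [h1, fderiv_clm_apply (differentiableAt_const d) h2]
    have h3 : fderiv ℝ (fun y => hs y c) x v = (fderiv ℝ hs x v) c := by
      rw [fderiv_clm_apply (hsd x) (differentiableAt_const c)]
      simp
    simp [h3]
  have heq : (fun y => b (hs y a)) = (fun y => a (hs y b)) := by
    funext y; exact hsym y a b
  calc b ((fderiv ℝ hs x v) a) = fderiv ℝ (fun y => b (hs y a)) x v := (key a b).symm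
    _ = fderiv ℝ (fun y => a (hs y b)) x v := by rw [heq]
    _ = a ((fderiv ℝ hs x v) b) := key b a

lemma nablaH_eq {hs : E → (E →L[ℝ] ℝ) →L[ℝ] E} (hsd : Differentiable ℝ hs)
    {α β : E → (E →L[ℝ] ℝ)} (hα : Differentiable ℝ α) (hβ : Differentiable ℝ β) (v x : E) :
    nablaH hs v α β x = (β x) ((fderiv ℝ hs x v) (α x)) := by
  simp [nablaH, fderiv_hfun' hsd hα hβ x v]

lemma DeltaH_eq {hs : E → (E →L[ℝ] ℝ) →L[ℝ] E} (hsd : Differentiable ℝ hs)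
    {α β : E → (E →L[ℝ] ℝ)} (hα : Differentiable ℝ α) (hβ : Differentiable ℝ β) (x : E) :
    DeltaH hs α β x
      = (fderiv ℝ hs x (hSharpV hs β x)) (α x) - (fderiv ℝ hs x (hSharpV hs α x)) (β x) := by
  simp only [DeltaH, braD, fderiv_hSharpV' hsd hα, fderiv_hSharpV' hsd hβ, map_sub, hSharpV]
  abel

end Aux

theorem stmt4 [FiniteDimensional ℝ E]
    (hs : E → (E →L[ℝ] ℝ) →L[ℝ] E) (hsm : ContDiff ℝ (⊤ : ℕ∞) hs)
    (hsym : ∀ (x : E) (α β : E →L[ℝ] ℝ), β (hs x α) = α (hs x β)) :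
    -- (a)
    (∀ α β γ : E → (E →L[ℝ] ℝ), ContDiff ℝ (⊤ : ℕ∞) α → ContDiff ℝ (⊤ : ℕ∞) β →
      ContDiff ℝ (⊤ : ℕ∞) γ → ∀ x : E,
        (γ x) (DeltaH hs α β x)
          = nablaH hs (hSharpV hs β x) α γ x - nablaH hs (hSharpV hs α x) β γ x)
    ∧
    -- (b)
    (∀ α β γ : E → (E →L[ℝ] ℝ), ContDiff ℝ (⊤ : ℕ∞) α → ContDiff ℝ (⊤ : ℕ∞) β →
      ContDiff ℝ (⊤ : ℕ∞) γ → ∀ x : E,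
        (γ x) (hs x (Dop hs α β x))
          = (γ x) (fderiv ℝ (hSharpV hs β) x (hSharpV hs α x))
            + (β x) (DeltaH hs α γ x)) := by
  have hsd : Differentiable ℝ hs := hsm.differentiable (by simp)
  constructor
  · intro α β γ hα hβ hγ x
    have hαd := hα.differentiable (by simp)
    have hβd := hβ.differentiable (by simp)
    have hγd := hγ.differentiable (by simp)
    rw [DeltaH_eq hsd hαd hβd x, map_sub, nablaH_eq hsd hαd hγd, nablaH_eq hsd hβd hγd]
  · intro α β γ hα hβ hγ x
    have hαd := hα.differentiable (by simp)
    have hβd := hβ.differentiable (by simp)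
    have hγd := hγ.differentiable (by simp)
    rw [hsym x (Dop hs α β x) (γ x), DeltaH_eq hsd hαd hγd x,
      fderiv_hSharpV' hsd hβd x (hSharpV hs α x)]
    simp only [Dop, ContinuousLinearMap.add_apply, ContinuousLinearMap.sub_apply,
      ContinuousLinearMap.coe_comp', Function.comp_apply, ContinuousLinearMap.flip_apply,
      map_sub, map_add, hSharpV]
    rw [fderiv_hfun' hsd hαd hβd,
      fderiv_hs_symm hsd hsym x (hs x (α x)) (β x) (γ x),
      hsym x (fderiv ℝ β x (hs x (α x))) (γ x)]
    ring

end
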